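/- arXiv:2406.01531 — 3 statements merged into one kernel-verified Lean document; each statement's English description precedes it below -/
import Mathlib

section
/- The parametrization of the class G² is bijective modulo scale: for y₁, y₂ ∈ ℝ³ with y₁ ≠ 0 and y₂ ≠ 0, one has G²(y₁) = G²(y₂) (as subgroups of SE(3)) if and only if there exists λ ∈ ℝ, λ ≠ 0, such that y₂ = λ y₁. -/
open Matrix

/-- Vectors in ℝ³. -/
abbrev V3 : Type := Fin 3 → ℝ

/-- The two-body phase space M = ℝ³ × ℝ³ × ℝ³ × ℝ³, points (q¹, q², p¹, p²). -/
abbrev M2B : Type := V3 × V3 × V3 × V3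

/-- A 3×3 real matrix is special orthogonal. -/
def SO3 (A : Matrix (Fin 3) (Fin 3) ℝ) : Prop := Aᵀ * A = 1 ∧ A.det = 1

/-- The action of (A, a) ∈ SE(3) on the phase space:
(A,a)·(q¹,q²,p¹,p²) = (Aq¹+a, Aq²+a, Ap¹, Ap²). -/
def act (A : Matrix (Fin 3) (Fin 3) ℝ) (a : V3) (m : M2B) : M2B :=
  (A *ᵥ m.1 + a, A *ᵥ m.2.1 + a, A *ᵥ m.2.2.1, A *ᵥ m.2.2.2)

/-- The isotropy subgroup SE(3)_{(q,p)} of a point of M, as a set of pairs (A,a)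
with A special orthogonal. -/
def isotropy (m : M2B) : Set (Matrix (Fin 3) (Fin 3) ℝ × V3) :=
  {g | SO3 g.1 ∧ act g.1 g.2 m = m}

/-- The momentum map J(q¹,q²,p¹,p²) = (q¹×p¹ + q²×p², p¹+p²). -/
def Jmom (m : M2B) : V3 × V3 :=
  (m.1 ⨯₃ m.2.2.1 + m.2.1 ⨯₃ m.2.2.2, m.2.2.1 + m.2.2.2)

/-- G¹(x) = {(A,a) ∈ SE(3) : a = x − Ax}. -/
def G1 (x : V3) : Set (Matrix (Fin 3) (Fin 3) ℝ × V3) :=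
  {g | SO3 g.1 ∧ g.2 = x - g.1 *ᵥ x}

/-- G²(y) = {(A,0) ∈ SE(3) : Ay = y}. -/
def G2 (y : V3) : Set (Matrix (Fin 3) (Fin 3) ℝ × V3) :=
  {g | SO3 g.1 ∧ g.1 *ᵥ y = y ∧ g.2 = 0}

/-- G³(x,y) = {(A,a) ∈ SE(3) : Ay = y and a = x − Ax}. -/
def G3 (x y : V3) : Set (Matrix (Fin 3) (Fin 3) ℝ × V3) :=
  {g | SO3 g.1 ∧ g.1 *ᵥ y = y ∧ g.2 = x - g.1 *ᵥ x}

/-- G⁴ = {(I, 0)}, the trivial subgroup. -/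
def G4 : Set (Matrix (Fin 3) (Fin 3) ℝ × V3) := {((1 : Matrix (Fin 3) (Fin 3) ℝ), (0 : V3))}

/-!
A subgroup `G²(y)` remembers the line `ℝ y`: the half-turn about the axis `y` lies in `G²(y)`, and
its only fixed vectors are the multiples of `y`. So `G²(y₁) = G²(y₂)` forces `y₂ ∈ ℝ y₁`, and
`y₂ ≠ 0` makes the scalar nonzero. Conversely `A (λ y) = λ y ↔ A y = y` for `λ ≠ 0`.
-/

namespace Matrix

variable {K n : Type*} [Field K] [Fintype n] [DecidableEq n]

/-- `2 P - 1` for the projection `P = v vᵀ / (v ⬝ᵥ v)` onto `K v`; in `ℝ³` it is the rotation by `π`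
about the axis `v`. -/
noncomputable def halfTurn (v : n → K) : Matrix n n K :=
  (2 / (v ⬝ᵥ v)) • vecMulVec v v - 1

theorem halfTurn_mulVec (v w : n → K) :
    halfTurn v *ᵥ w = (2 * (v ⬝ᵥ w) / (v ⬝ᵥ v)) • v - w := by
  rw [halfTurn, sub_mulVec, smul_mulVec, vecMulVec_mulVec, one_mulVec, op_smul_eq_smul,
    smul_smul, div_mul_eq_mul_div]

theorem halfTurn_mulVec_self {v : n → K} (hv : v ⬝ᵥ v ≠ 0) : halfTurn v *ᵥ v = v := by
  rw [halfTurn_mulVec, mul_div_assoc, div_self hv, mul_one, two_smul, add_sub_cancel_right]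

theorem eq_smul_of_halfTurn_mulVec_eq [NeZero (2 : K)] {v w : n → K} (h : halfTurn v *ᵥ w = w) :
    w = (v ⬝ᵥ w / v ⬝ᵥ v) • v := by
  rw [halfTurn_mulVec, sub_eq_iff_eq_add, ← two_smul K w, mul_div_assoc, ← smul_smul] at h
  exact (smul_right_injective _ two_ne_zero h).symm

theorem halfTurn_transpose (v : n → K) : (halfTurn v)ᵀ = halfTurn v := by
  rw [halfTurn, transpose_sub, transpose_smul, transpose_vecMulVec, transpose_one]

theorem halfTurn_mul_self {v : n → K} (hv : v ⬝ᵥ v ≠ 0) : halfTurn v * halfTurn v = 1 := by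
  have : vecMulVec v v * vecMulVec v v = (v ⬝ᵥ v) • vecMulVec v v := by
    rw [vecMulVec_mul_vecMulVec, vecMulVec_smul]
  have hc : 2 / (v ⬝ᵥ v) * (2 / (v ⬝ᵥ v)) * (v ⬝ᵥ v) = 2 * (2 / (v ⬝ᵥ v)) := by
    field_simp
  simp only [halfTurn, sub_mul, mul_sub, smul_mul_smul_comm, this, smul_smul, hc, mul_one, one_mul]
  module

theorem det_halfTurn {v : n → K} (hv : v ⬝ᵥ v ≠ 0) :
    (halfTurn v).det = (-1) ^ (Fintype.card n + 1) := by
  have : halfTurn v = -(1 + replicateCol Unit (-(2 / (v ⬝ᵥ v)) • v) * replicateRow Unit v) := by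
    rw [halfTurn, replicateCol_smul, smul_mul, ← vecMulVec_eq, neg_add, neg_smul, neg_neg,
      neg_add_eq_sub]
  rw [this, det_neg, det_one_add_replicateCol_mul_replicateRow, dotProduct_smul, smul_eq_mul,
    neg_mul, div_mul_cancel₀ _ hv, pow_succ]
  ring

end Matrix

theorem SO3_halfTurn {v : V3} (hv : v ≠ 0) : SO3 (halfTurn v) := by
  have hvv : v ⬝ᵥ v ≠ 0 := mt dotProduct_self_eq_zero.mp hv
  refine ⟨by rw [halfTurn_transpose, halfTurn_mul_self hvv], ?_⟩
  rw [det_halfTurn hvv]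
  norm_num

theorem G2_smul (y : V3) {c : ℝ} (hc : c ≠ 0) : G2 (c • y) = G2 y := by
  ext g
  simp [G2, mulVec_smul, (smul_right_injective V3 hc).eq_iff]

theorem eq_smul_of_G2_eq {y₁ y₂ : V3} (hy₁ : y₁ ≠ 0) (h : G2 y₁ = G2 y₂) :
    ∃ c : ℝ, y₂ = c • y₁ := by
  have hmem : (halfTurn y₁, (0 : V3)) ∈ G2 y₂ :=
    h ▸ ⟨SO3_halfTurn hy₁, halfTurn_mulVec_self (mt dotProduct_self_eq_zero.mp hy₁), rfl⟩
  exact ⟨_, eq_smul_of_halfTurn_mulVec_eq hmem.2.1⟩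

/-- The parametrization of the class G² is bijective modulo scale. -/
theorem stmt5 (y1 y2 : V3) (h1 : y1 ≠ 0) (h2 : y2 ≠ 0) :
    G2 y1 = G2 y2 ↔ ∃ l : ℝ, l ≠ 0 ∧ y2 = l • y1 := by
  constructor
  · intro h
    obtain ⟨l, rfl⟩ := eq_smul_of_G2_eq h1 h
    exact ⟨l, left_ne_zero_of_smul h2, rfl⟩
  · rintro ⟨l, hl, rfl⟩
    exact (G2_smul y1 hl).symm
end

section
/- (Case 2) Let y₀ ∈ ℝ³, y₀ ≠ 0. Then J⁻¹(0,0) ∩ M_{G²(y₀)} = {(λy₀, βy₀, 0, 0) : λ,β ∈ ℝ, λ ≠ β} ∪ {(λy₀, βy₀, γy₀, −γy₀) : λ,β,γ ∈ ℝ, γ ≠ 0}, and this set is path-connected. -/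
open Matrix

/-! The half-turn about `y₀` lies in `G²(y₀)`, so it fixes all four vectors of such a point,
which forces them onto the line `ℝ y₀`; zero total momentum then gives `p² = -p¹`. Among these
points only the collisions at rest `(λy₀, λy₀, 0, 0)` fail: their isotropy is all of `G¹(λy₀)`,
which contains rotations moving `y₀`. At every other point `q¹ - q²` or `p¹` is a nonzero
multiple of `y₀`, so an isotropy element fixes `y₀` and then has no translation part. The
parameter set `{(λ, β, γ) | λ ≠ β ∨ γ ≠ 0}` is `ℝ³` minus a line, i.e. a copy of
`ℝ × (ℝ² ∖ {0})`, hence path-connected. -/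

/-- Rotation by `π` about the axis spanned by `y`. -/
noncomputable def rotPi (y : V3) : Matrix (Fin 3) (Fin 3) ℝ :=
  (2 / (y ⬝ᵥ y)) • vecMulVec y y - 1

lemma rotPi_mulVec (y v : V3) : rotPi y *ᵥ v = (2 * (y ⬝ᵥ v) / (y ⬝ᵥ y)) • y - v := by
  rw [rotPi, sub_mulVec, smul_mulVec, vecMulVec_mulVec, one_mulVec, op_smul_eq_smul, smul_smul,
    div_mul_eq_mul_div, mul_comm 2]

lemma rotPi_mulVec_rotPi_mulVec {y : V3} (hy : y ≠ 0) (v : V3) :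
    rotPi y *ᵥ (rotPi y *ᵥ v) = v := by
  have hyy : y ⬝ᵥ y ≠ 0 := dotProduct_self_eq_zero.not.mpr hy
  have : 2 * (y ⬝ᵥ ((2 * (y ⬝ᵥ v) / (y ⬝ᵥ y)) • y - v)) / (y ⬝ᵥ y) =
      2 * (y ⬝ᵥ v) / (y ⬝ᵥ y) := by
    rw [dotProduct_sub, dotProduct_smul, smul_eq_mul]
    field_simp
    ring
  rw [rotPi_mulVec y v, rotPi_mulVec, this, sub_sub_cancel]

lemma SO3_rotPi {y : V3} (hy : y ≠ 0) : SO3 (rotPi y) := by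
  have hyy : y ⬝ᵥ y ≠ 0 := dotProduct_self_eq_zero.not.mpr hy
  constructor
  · have hT : (rotPi y)ᵀ = rotPi y := by
      rw [rotPi, transpose_sub, transpose_smul, transpose_vecMulVec, transpose_one]
    rw [hT, ext_iff_mulVec]
    intro v
    rw [← mulVec_mulVec, rotPi_mulVec_rotPi_mulVec hy, one_mulVec]
  · have : (rotPi y).det = 2 / (y ⬝ᵥ y) * (y ⬝ᵥ y) - 1 := by
      simp [rotPi, det_fin_three, vecMulVec_apply, dotProduct, Fin.sum_univ_three]
      ring
    rw [this, div_mul_cancel₀ _ hyy]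
    norm_num

lemma rotPi_mulVec_self {y : V3} (hy : y ≠ 0) : rotPi y *ᵥ y = y := by
  have hyy : y ⬝ᵥ y ≠ 0 := dotProduct_self_eq_zero.not.mpr hy
  rw [rotPi_mulVec, mul_div_cancel_right₀ _ hyy, two_smul, add_sub_cancel_right]

lemma exists_eq_smul_of_rotPi_mulVec_eq {y v : V3} (h : rotPi y *ᵥ v = v) :
    ∃ t : ℝ, v = t • y := by
  rw [rotPi_mulVec, sub_eq_iff_eq_add, ← two_smul ℝ v] at h
  refine ⟨(y ⬝ᵥ v) / (y ⬝ᵥ y), smul_right_injective V3 (two_ne_zero : (2 : ℝ) ≠ 0) ?_⟩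
  rw [mul_div_assoc, ← smul_smul] at h
  exact h.symm

lemma exists_SO3_mulVec_ne {y : V3} (hy : y ≠ 0) : ∃ A, SO3 A ∧ A *ᵥ y ≠ y := by
  by_contra! h
  obtain ⟨s, hs⟩ :=
    exists_eq_smul_of_rotPi_mulVec_eq (h (rotPi (Pi.single 0 1)) (SO3_rotPi (by simp)))
  obtain ⟨t, ht⟩ :=
    exists_eq_smul_of_rotPi_mulVec_eq (h (rotPi (Pi.single 1 1)) (SO3_rotPi (by simp)))
  apply hy
  funext i
  fin_cases i
  · simpa using congrFun ht 0
  · simpa using congrFun hs 1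
  · simpa using congrFun hs 2

lemma isotropy_collision (x : V3) : isotropy (x, x, 0, 0) = G1 x := by
  ext ⟨A, a⟩
  simp [isotropy, G1, act, eq_sub_iff_add_eq']

lemma G1_ne_G2 (x : V3) {y : V3} (hy : y ≠ 0) : G1 x ≠ G2 y := by
  obtain ⟨A, hA, hAy⟩ := exists_SO3_mulVec_ne hy
  intro h
  have : (A, x - A *ᵥ x) ∈ G2 y := h ▸ ⟨hA, rfl⟩
  exact hAy this.2.1

def axialPoint (y : V3) (l b c : ℝ) : M2B := (l • y, b • y, c • y, -(c • y))

lemma Jmom_axialPoint (y : V3) (l b c : ℝ) : Jmom (axialPoint y l b c) = (0, 0) := by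
  simp [Jmom, axialPoint, cross_self]

lemma isotropy_axialPoint {y : V3} {l b c : ℝ} (h : l ≠ b ∨ c ≠ 0) :
    isotropy (axialPoint y l b c) = G2 y := by
  ext ⟨A, a⟩
  simp only [isotropy, G2, act, axialPoint, Set.mem_ofPred_eq, Prod.mk.injEq, mulVec_smul,
    mulVec_neg, neg_inj]
  constructor
  · rintro ⟨hA, hl, hb, hc, -⟩
    have hAy : A *ᵥ y = y := by
      rcases h with hlb | hc0
      · refine smul_right_injective V3 (sub_ne_zero.mpr hlb) ?_
        simp only [sub_smul]
        linear_combination (exp := 1) hl - hb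
      · exact smul_right_injective V3 hc0 hc
    rw [hAy, add_eq_left] at hl
    exact ⟨hA, hAy, hl⟩
  · rintro ⟨hA, hAy, rfl⟩
    simp [hA, hAy]

lemma exists_axialPoint_of_isotropy_eq_G2 {y : V3} (hy : y ≠ 0) {m : M2B}
    (hJ : Jmom m = (0, 0)) (hI : isotropy m = G2 y) :
    ∃ l b c : ℝ, (l ≠ b ∨ c ≠ 0) ∧ m = axialPoint y l b c := by
  obtain ⟨q₁, q₂, p₁, p₂⟩ := m
  have hrot : (rotPi y, (0 : V3)) ∈ isotropy (q₁, q₂, p₁, p₂) :=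
    hI ▸ ⟨SO3_rotPi hy, rotPi_mulVec_self hy, rfl⟩
  simp only [isotropy, act, add_zero, Set.mem_ofPred_eq, Prod.mk.injEq] at hrot
  obtain ⟨-, hq₁, hq₂, hp₁, hp₂⟩ := hrot
  obtain ⟨l, rfl⟩ := exists_eq_smul_of_rotPi_mulVec_eq hq₁
  obtain ⟨b, rfl⟩ := exists_eq_smul_of_rotPi_mulVec_eq hq₂
  obtain ⟨c, rfl⟩ := exists_eq_smul_of_rotPi_mulVec_eq hp₁
  obtain ⟨e, rfl⟩ := exists_eq_smul_of_rotPi_mulVec_eq hp₂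
  have he : e = -c := by
    have : (c + e) • y = 0 := by rw [add_smul]; exact (Prod.ext_iff.mp hJ).2
    linarith [(smul_eq_zero.mp this).resolve_right hy]
  subst he
  refine ⟨l, b, c, ?_, by rw [axialPoint, neg_smul]⟩
  by_contra! hlbc
  obtain ⟨rfl, rfl⟩ := hlbc
  simp only [neg_zero, zero_smul] at hI
  rw [isotropy_collision] at hI
  exact G1_ne_G2 _ hy hI

lemma setOf_isotropy_eq_G2_eq_image {y : V3} (hy : y ≠ 0) :
    {m : M2B | Jmom m = (0, 0) ∧ isotropy m = G2 y} =
      (fun p : ℝ × ℝ × ℝ => axialPoint y p.1 p.2.1 p.2.2) '' {p | p.1 ≠ p.2.1 ∨ p.2.2 ≠ 0} := by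
  ext m
  constructor
  · rintro ⟨hJ, hI⟩
    obtain ⟨l, b, c, h, rfl⟩ := exists_axialPoint_of_isotropy_eq_G2 hy hJ hI
    exact ⟨(l, b, c), h, rfl⟩
  · rintro ⟨p, h, rfl⟩
    exact ⟨Jmom_axialPoint .., isotropy_axialPoint h⟩

lemma image_axialPoint (y : V3) :
    (fun p : ℝ × ℝ × ℝ => axialPoint y p.1 p.2.1 p.2.2) '' {p | p.1 ≠ p.2.1 ∨ p.2.2 ≠ 0} =
      {m : M2B | ∃ l b : ℝ, l ≠ b ∧ m = (l • y, b • y, 0, 0)} ∪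
        {m : M2B | ∃ l b c : ℝ, c ≠ 0 ∧ m = (l • y, b • y, c • y, -(c • y))} := by
  ext m
  constructor
  · rintro ⟨⟨l, b, c⟩, h, rfl⟩
    by_cases hc : c = 0
    · exact Or.inl ⟨l, b, h.resolve_right (not_not.mpr hc), by simp [axialPoint, hc]⟩
    · exact Or.inr ⟨l, b, c, hc, rfl⟩
  · rintro (⟨l, b, hlb, rfl⟩ | ⟨l, b, c, hc, rfl⟩)
    · exact ⟨(l, b, 0), Or.inl hlb, by simp [axialPoint]⟩
    · exact ⟨(l, b, c), Or.inr hc, rfl⟩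

lemma isPathConnected_setOf_ne_or_ne_zero :
    IsPathConnected {p : ℝ × ℝ × ℝ | p.1 ≠ p.2.1 ∨ p.2.2 ≠ 0} := by
  have h : {p : ℝ × ℝ × ℝ | p.1 ≠ p.2.1 ∨ p.2.2 ≠ 0} =
      (fun q : ℝ × ℝ × ℝ => (q.1 + q.2.1, q.1, q.2.2)) '' (Set.univ ×ˢ {0}ᶜ) := by
    ext ⟨l, b, c⟩
    constructor
    · intro h
      refine ⟨(b, l - b, c), ⟨trivial, ?_⟩, by simp⟩
      simpa only [Set.mem_ofPred_eq, Set.mem_compl_singleton_iff, Ne, Prod.mk_eq_zero,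
        sub_eq_zero, not_and_or] using h
    · rintro ⟨⟨b', d, c'⟩, ⟨-, hdc⟩, he⟩
      simp only [Prod.mk.injEq] at he
      obtain ⟨rfl, rfl, rfl⟩ := he
      simpa only [Set.mem_ofPred_eq, Set.mem_compl_singleton_iff, Ne, Prod.mk_eq_zero,
        add_eq_left, not_and_or] using hdc
  rw [h]
  refine (isPathConnected_univ.prod
    (isPathConnected_compl_singleton_of_one_lt_rank ?_ 0)).image (by fun_prop)
  rw [rank_prod', Module.rank_self]
  norm_num

/-- Case 2: J⁻¹(0,0) ∩ M_{G²(y₀)} equals the stated union and is path-connected. -/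
theorem stmt8 (y0 : V3) (hy : y0 ≠ 0) :
    {m : M2B | Jmom m = (0, 0) ∧ isotropy m = G2 y0} =
      ({m : M2B | ∃ l b : ℝ, l ≠ b ∧ m = (l • y0, b • y0, 0, 0)} ∪
       {m : M2B | ∃ l b c : ℝ, c ≠ 0 ∧ m = (l • y0, b • y0, c • y0, -(c • y0))}) ∧
    IsPathConnected {m : M2B | Jmom m = (0, 0) ∧ isotropy m = G2 y0} := by
  have hcont : Continuous fun p : ℝ × ℝ × ℝ => axialPoint y0 p.1 p.2.1 p.2.2 := by
    unfold axialPoint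
    fun_prop
  rw [setOf_isotropy_eq_G2_eq_image hy]
  exact ⟨image_axialPoint y0, isPathConnected_setOf_ne_or_ne_zero.image hcont⟩
end

section
/- (Connectedness in Case 7) Let u₀ ∈ ℝ³, u₀ ≠ 0. Then the set J⁻¹(0,u₀) ∩ M_{G⁴} = {(q,p) ∈ M : J(q,p) = (0,u₀) and SE(3)_{(q,p)} = {(I,0)}} is path-connected. -/
/-!
For `m = (q¹, q², p¹, p²)` with `p¹ + p² = u₀ ≠ 0`, an element `(A, a)` of the isotropy group
is determined by `A` through `a = q¹ - A q¹`, and `A` must fix `u₀`, `p¹` and `q¹ - q²`. A rotation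
fixing two non-parallel vectors is the identity, while the half-turn about `u₀` fixes the whole
line `ℝ u₀`; so the isotropy is trivial exactly when `p¹` or `q¹ - q²` is not parallel to `u₀`.
Both this condition and `q¹ × p¹ + q² × p² = 0` survive the straight-line homotopies that shrink
the positions to `0` (when `p¹ ∦ u₀`), or that keep `q¹ - q²` fixed and move it into the momentum
slot (when `q¹ - q² ∦ u₀`). Hence every point is joined to one of the form `(0, 0, p, u₀ - p)` with
`p ∉ ℝ u₀`, and these form a copy of `ℝ³` minus a line, which is path-connected.
-/

open Matrix

theorem cross_eq_zero_iff_mem_span_singleton {K : Type*} [Field K] {u v : Fin 3 → K}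
    (hu : u ≠ 0) : u ⨯₃ v = 0 ↔ v ∈ K ∙ u := by
  rw [Submodule.mem_span_singleton, ← not_iff_not, ← ne_eq,
    crossProduct_ne_zero_iff_linearIndependent, LinearIndependent.pair_iff' hu, not_exists]

theorem isPathConnected_setOf_cross_ne_zero {u : V3} (hu : u ≠ 0) :
    IsPathConnected {v : V3 | u ⨯₃ v ≠ 0} := by
  have hcodim : Module.finrank ℝ (V3 ⧸ ℝ ∙ u) = 2 := by
    have := Submodule.finrank_quotient_add_finrank (ℝ ∙ u)
    rw [finrank_span_singleton hu, Module.finrank_fin_fun] at this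
    omega
  convert isPathConnected_compl_of_one_lt_codim (E := ℝ ∙ u) ?_ using 1
  · ext v
    simp [cross_eq_zero_iff_mem_span_singleton hu]
  · rw [← Module.finrank_eq_rank, hcodim]
    norm_num

theorem Matrix.mulVec_cross_mulVec {R : Type*} [CommRing R] (A : Matrix (Fin 3) (Fin 3) R)
    (x y : Fin 3 → R) : (A *ᵥ x) ⨯₃ (A *ᵥ y) = A.adjugateᵀ *ᵥ (x ⨯₃ y) := by
  ext i
  fin_cases i <;>
    simp [cross_apply, mulVec, dotProduct, Fin.sum_univ_three, adjugate_fin_three] <;> ring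

theorem Matrix.eq_one_of_mulVec_row_eq_self {R n : Type*} [CommRing R] [Fintype n]
    [DecidableEq n] {A B : Matrix n n R} (hB : IsUnit B.det) (hA : ∀ i, A *ᵥ B i = B i) :
    A = 1 := by
  have hBA : B * Aᵀ = B * 1 := by
    funext i
    rw [mul_apply_eq_vecMul, vecMul_transpose, hA, Matrix.mul_one]
  rw [← transpose_eq_one, ← (B.isUnit_iff_isUnit_det.2 hB).mul_right_inj.1 hBA]

namespace SO3

variable {A : Matrix (Fin 3) (Fin 3) ℝ}

theorem adjugate_eq_transpose (hA : SO3 A) : A.adjugate = Aᵀ :=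
  calc A.adjugate = A.adjugate * A * Aᵀ := by
        rw [Matrix.mul_assoc, mul_eq_one_comm.1 hA.1, Matrix.mul_one]
    _ = Aᵀ := by rw [adjugate_mul, hA.2, one_smul, Matrix.one_mul]

theorem mulVec_cross (hA : SO3 A) (x y : V3) : A *ᵥ (x ⨯₃ y) = (A *ᵥ x) ⨯₃ (A *ᵥ y) := by
  rw [mulVec_cross_mulVec, hA.adjugate_eq_transpose, transpose_transpose]

theorem eq_one_of_mulVec_eq_self (hA : SO3 A) {x y : V3} (hx : A *ᵥ x = x) (hy : A *ᵥ y = y)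
    (hxy : x ⨯₃ y ≠ 0) : A = 1 := by
  refine eq_one_of_mulVec_row_eq_self (B := ![x, y, x ⨯₃ y]) ?_ ?_
  · rw [isUnit_iff_ne_zero, ← triple_product_eq_det, triple_product_permutation,
      triple_product_permutation, Ne, dotProduct_self_eq_zero]
    exact hxy
  · intro i
    fin_cases i
    · exact hx
    · exact hy
    · show A *ᵥ (x ⨯₃ y) = x ⨯₃ y
      rw [hA.mulVec_cross, hx, hy]

theorem exists_ne_one_mulVec_eq_self {u : V3} (hu : u ≠ 0) :
    ∃ A, SO3 A ∧ A ≠ 1 ∧ A *ᵥ u = u := by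
  have hd : u ⬝ᵥ u ≠ 0 := mt dotProduct_self_eq_zero.1 hu
  -- `P - 1` is the half-turn about `u`, `P` being twice the orthogonal projection onto `ℝ u`.
  set P : Matrix (Fin 3) (Fin 3) ℝ := vecMulVec u ((2 / u ⬝ᵥ u) • u) with hP
  have hPu : P *ᵥ u = (2 : ℝ) • u := by
    rw [hP, vecMulVec_mulVec, smul_dotProduct, smul_eq_mul, div_mul_cancel₀ _ hd,
      op_smul_eq_smul]
  have hPP : P * P = (2 : ℝ) • P := by
    rw [hP, vecMulVec_mul_vecMulVec, smul_dotProduct, smul_eq_mul, div_mul_cancel₀ _ hd,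
      vecMulVec_smul]
  have hPt : Pᵀ = P := by
    rw [hP, transpose_vecMulVec, vecMulVec_smul, smul_vecMulVec]
  have hdet : (1 - P).det = -1 := by
    rw [sub_eq_add_neg, ← vecMulVec_neg, vecMulVec_eq Unit,
      det_one_add_replicateCol_mul_replicateRow, neg_dotProduct, smul_dotProduct, smul_eq_mul,
      div_mul_cancel₀ _ hd]
    norm_num
  refine ⟨P - 1, ⟨?_, ?_⟩, ?_, ?_⟩
  · rw [transpose_sub, transpose_one, hPt, sub_mul, mul_sub, mul_sub, hPP, Matrix.mul_one,
      Matrix.one_mul, Matrix.one_mul, two_smul]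
    abel
  · rw [← neg_sub, det_neg, hdet]
    norm_num
  · intro h
    have htrace := congrArg trace h
    rw [trace_sub, hP, trace_vecMulVec, dotProduct_smul, smul_eq_mul, div_mul_cancel₀ _ hd,
      trace_one] at htrace
    norm_num at htrace
  · rw [sub_mulVec, hPu, one_mulVec, two_smul, add_sub_cancel_right]

end SO3

theorem mem_isotropy_iff {A : Matrix (Fin 3) (Fin 3) ℝ} {a q₁ q₂ p₁ p₂ : V3} :
    (A, a) ∈ isotropy (q₁, q₂, p₁, p₂) ↔
      SO3 A ∧ a = q₁ - A *ᵥ q₁ ∧ A *ᵥ (q₁ - q₂) = q₁ - q₂ ∧ A *ᵥ p₁ = p₁ ∧ A *ᵥ p₂ = p₂ := by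
  simp only [isotropy, act, Set.mem_ofPred_eq, Prod.mk.injEq, mulVec_sub]
  refine and_congr_right fun _ =>
    ⟨fun ⟨h₁, h₂, hp⟩ => ⟨?_, ?_, hp⟩, fun ⟨ha, hq, hp⟩ => ⟨?_, ?_, hp⟩⟩
  · linear_combination h₁
  · linear_combination h₁ - h₂
  · linear_combination ha
  · linear_combination ha - hq

theorem isotropy_eq_G4_iff {u q₁ q₂ p₁ p₂ : V3} (hu : u ≠ 0) (hp : p₁ + p₂ = u) :
    isotropy (q₁, q₂, p₁, p₂) = G4 ↔ u ⨯₃ p₁ ≠ 0 ∨ u ⨯₃ (q₁ - q₂) ≠ 0 := by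
  subst hp
  constructor
  · intro h
    by_contra! hfix
    simp only [cross_eq_zero_iff_mem_span_singleton hu] at hfix
    obtain ⟨A, hA, hA1, hAu⟩ := SO3.exists_ne_one_mulVec_eq_self hu
    have hspan : ∀ v ∈ ℝ ∙ (p₁ + p₂), A *ᵥ v = v := by
      intro v hv
      obtain ⟨c, rfl⟩ := Submodule.mem_span_singleton.1 hv
      rw [mulVec_smul, hAu]
    have hp₂ : p₂ ∈ ℝ ∙ (p₁ + p₂) := by
      simpa using Submodule.sub_mem _ (Submodule.mem_span_singleton_self _) hfix.1
    have hmem : (A, q₁ - A *ᵥ q₁) ∈ isotropy (q₁, q₂, p₁, p₂) :=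
      mem_isotropy_iff.2 ⟨hA, rfl, hspan _ hfix.2, hspan _ hfix.1, hspan _ hp₂⟩
    rw [h, G4, Set.mem_singleton_iff, Prod.mk.injEq] at hmem
    exact hA1 hmem.1
  · intro h
    ext ⟨A, a⟩
    refine ⟨fun hm => ?_, fun hm => ?_⟩
    · obtain ⟨hA, rfl, hq, hp₁, hp₂⟩ := mem_isotropy_iff.1 hm
      have hu : A *ᵥ (p₁ + p₂) = p₁ + p₂ := by rw [mulVec_add, hp₁, hp₂]
      obtain rfl : A = 1 :=
        h.elim (hA.eq_one_of_mulVec_eq_self hu hp₁) (hA.eq_one_of_mulVec_eq_self hu hq)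
      simp [G4]
    · obtain ⟨rfl, rfl⟩ : A = 1 ∧ a = 0 := by simpa [G4] using hm
      simp [mem_isotropy_iff, SO3]

def freeLevelSet (u : V3) : Set M2B := {m | Jmom m = (0, u) ∧ isotropy m = G4}

theorem mem_freeLevelSet_iff {u q₁ q₂ p₁ p₂ : V3} (hu : u ≠ 0) :
    (q₁, q₂, p₁, p₂) ∈ freeLevelSet u ↔
      p₁ + p₂ = u ∧ q₁ ⨯₃ p₁ + q₂ ⨯₃ p₂ = 0 ∧ (u ⨯₃ p₁ ≠ 0 ∨ u ⨯₃ (q₁ - q₂) ≠ 0) := by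
  simp only [freeLevelSet, Jmom, Set.mem_ofPred_eq, Prod.mk.injEq]
  exact ⟨fun ⟨⟨hJ, hp⟩, hG⟩ => ⟨hp, hJ, (isotropy_eq_G4_iff hu hp).1 hG⟩,
    fun ⟨hp, hJ, hfree⟩ => ⟨⟨hJ, hp⟩, (isotropy_eq_G4_iff hu hp).2 hfree⟩⟩

theorem mk_zero_zero_mem_freeLevelSet {u p : V3} (hu : u ≠ 0) (hp : u ⨯₃ p ≠ 0) :
    ((0 : V3), (0 : V3), p, u - p) ∈ freeLevelSet u :=
  (mem_freeLevelSet_iff hu).2 ⟨add_sub_cancel p u, by simp, Or.inl hp⟩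

theorem joinedIn_freeLevelSet_zero_zero {u p p' : V3} (hu : u ≠ 0) (hp : u ⨯₃ p ≠ 0)
    (hp' : u ⨯₃ p' ≠ 0) : JoinedIn (freeLevelSet u) (0, 0, p, u - p) (0, 0, p', u - p') := by
  have hf : Continuous fun v : V3 => ((0 : V3), (0 : V3), v, u - v) := by fun_prop
  refine (((isPathConnected_setOf_cross_ne_zero hu).joinedIn p hp p' hp').map hf).mono ?_
  rintro _ ⟨v, hv, rfl⟩
  exact mk_zero_zero_mem_freeLevelSet hu hv

theorem joinedIn_freeLevelSet_zero_zero_of_cross_ne_zero {u q₁ q₂ p₁ p₂ : V3} (hu : u ≠ 0)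
    (hm : (q₁, q₂, p₁, p₂) ∈ freeLevelSet u) (hp₁ : u ⨯₃ p₁ ≠ 0) :
    JoinedIn (freeLevelSet u) (q₁, q₂, p₁, p₂) (0, 0, p₁, p₂) := by
  obtain ⟨hp, hJ, -⟩ := (mem_freeLevelSet_iff hu).1 hm
  refine JoinedIn.ofLine (f := fun t : ℝ => ((1 - t) • q₁, (1 - t) • q₂, p₁, p₂))
    (by fun_prop) (by simp) (by simp) (Set.image_subset_iff.2 fun t _ => ?_)
  refine (mem_freeLevelSet_iff hu).2 ⟨hp, ?_, Or.inl hp₁⟩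
  simp only [map_smul, LinearMap.smul_apply, ← smul_add, hJ, smul_zero]

theorem joinedIn_freeLevelSet_of_cross_sub_ne_zero {u q₁ q₂ p₁ p₂ : V3} (hu : u ≠ 0)
    (hm : (q₁, q₂, p₁, p₂) ∈ freeLevelSet u) (hq : u ⨯₃ (q₁ - q₂) ≠ 0) :
    JoinedIn (freeLevelSet u) (q₁, q₂, p₁, p₂) (q₁ - q₂, 0, 0, u) := by
  obtain ⟨hp, hJ, -⟩ := (mem_freeLevelSet_iff hu).1 hm
  refine JoinedIn.ofLine
    (f := fun t : ℝ => (q₁ - t • q₂, (1 - t) • q₂, (1 - t) • p₁, p₂ + t • p₁))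
    (by fun_prop) (by simp) (by simp [← hp, add_comm]) (Set.image_subset_iff.2 fun t _ => ?_)
  refine (mem_freeLevelSet_iff hu).2
    ⟨by rw [← hp]; module, ?_, Or.inr (by convert hq using 2; module)⟩
  simp only [map_smul, map_sub, map_add, LinearMap.smul_apply, LinearMap.sub_apply]
  linear_combination (norm := module) (1 - t) • hJ

theorem joinedIn_freeLevelSet_position_to_momentum {u q : V3} (hu : u ≠ 0)
    (hq : u ⨯₃ q ≠ 0) : JoinedIn (freeLevelSet u) (q, 0, 0, u) (0, 0, q, u - q) := by
  refine JoinedIn.ofLine (f := fun t : ℝ => ((1 - t) • q, 0, t • q, u - t • q))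
    (by fun_prop) (by simp) (by simp) (Set.image_subset_iff.2 fun t _ => ?_)
  refine (mem_freeLevelSet_iff hu).2 ⟨add_sub_cancel _ u, by simp, ?_⟩
  rcases eq_or_ne t 1 with rfl | ht
  · exact Or.inl (by simpa using hq)
  · exact Or.inr (by simpa [map_smul, sub_eq_zero, Ne.symm ht] using hq)

theorem exists_joinedIn_freeLevelSet_zero_zero {u : V3} (hu : u ≠ 0) {m : M2B}
    (hm : m ∈ freeLevelSet u) : ∃ p, u ⨯₃ p ≠ 0 ∧ JoinedIn (freeLevelSet u) m (0, 0, p, u - p) := by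
  obtain ⟨q₁, q₂, p₁, p₂⟩ := m
  obtain ⟨hp, -, hp₁ | hq⟩ := (mem_freeLevelSet_iff hu).1 hm
  · refine ⟨p₁, hp₁, ?_⟩
    simpa only [eq_sub_of_add_eq' hp] using
      joinedIn_freeLevelSet_zero_zero_of_cross_ne_zero hu hm hp₁
  · exact ⟨q₁ - q₂, hq, (joinedIn_freeLevelSet_of_cross_sub_ne_zero hu hm hq).trans
      (joinedIn_freeLevelSet_position_to_momentum hu hq)⟩

/-- Connectedness in Case 7: J⁻¹(0,u₀) ∩ M_{G⁴} is path-connected. -/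
theorem stmt15 (u0 : V3) (hu : u0 ≠ 0) :
    IsPathConnected {m : M2B | Jmom m = (0, u0) ∧ isotropy m = G4} := by
  obtain ⟨w, hw⟩ := (isPathConnected_setOf_cross_ne_zero hu).nonempty
  refine ⟨(0, 0, w, u0 - w), mk_zero_zero_mem_freeLevelSet hu hw, fun m hm => ?_⟩
  obtain ⟨p, hp, hmp⟩ := exists_joinedIn_freeLevelSet_zero_zero hu hm
  exact (joinedIn_freeLevelSet_zero_zero hu hw hp).trans hmp.symm
end
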